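/- For any natural numbers k, n, m, there exists a number R such that for any linearly ordered set X with |X| ≥ R and any function f : Xⁿ → Fin k, there is a subset Y ⊆ X with |Y| ≥ m such that f is constant on each equivalence class of Yⁿ under the order-type equivalence relation ∼. -/

import Mathlib

set_option autoImplicit false

/-- Order-type equivalence of tuples: `x ∼ y` iff corresponding entries compare the
same way (both `<` and `=` patterns agree). -/
def OrderTypeEquiv {X : Type} [LinearOrder X] {n : ℕ} (x y : Fin n → X) : Prop :=
  ∀ i j : Fin n, i < j → ((x i < x j ↔ y i < y j) ∧ (x i = x j ↔ y i = y j))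

/-!
Every tuple `u` factors as `x ∘ denseRank u` with `x` strictly increasing, where `denseRank u i`
is the number of distinct entries of `u` below `u i`; equivalent tuples have the same dense rank.
So it suffices to colour each strictly increasing `n`-tuple `x` by `p ↦ f (x ∘ p)` and apply the
finite Ramsey theorem for increasing tuples, which gives a monochromatic set `t`. Removing the
top `n` elements of `t` leaves room to pad every tuple from the rest to an increasing `n`-tuple
in `t`. The Ramsey theorem is proved by induction on `n`, passing through sets on which the colour
of an increasing tuple depends only on its least entry, followed by pigeonhole.
-/

open Finset

theorem Finset.card_image_eq_of_eq_iff {ι α β : Type*} [DecidableEq α] [DecidableEq β]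
    {s : Finset ι} {f : ι → α} {g : ι → β} (h : ∀ i ∈ s, ∀ j ∈ s, f i = f j ↔ g i = g j) :
    #(s.image f) = #(s.image g) := by
  classical
  induction s using Finset.induction_on with
  | empty => simp
  | insert a s ha ih =>
    have hmem : f a ∈ s.image f ↔ g a ∈ s.image g := by
      simp only [mem_image]
      exact exists_congr fun j => and_congr_right fun hj =>
        h j (mem_insert_of_mem hj) a (mem_insert_self a s)
    rw [image_insert, image_insert, card_insert_eq_ite, card_insert_eq_ite,
      ih fun i hi j hj => h i (mem_insert_of_mem hi) j (mem_insert_of_mem hj)]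
    simp only [hmem]

theorem Finset.card_filter_lt_orderEmbOfFin {α : Type*} [LinearOrder α] (s : Finset α) {k : ℕ}
    (h : #s = k) (j : Fin k) : #(s.filter (· < s.orderEmbOfFin h j)) = j :=
  calc #(s.filter (· < s.orderEmbOfFin h j))
      = #((univ.map (s.orderEmbOfFin h).toEmbedding).filter (· < s.orderEmbOfFin h j)) := by
        rw [map_orderEmbOfFin_univ]
    _ = j := by rw [filter_map, card_map]; simp [filter_gt_eq_Iio]

theorem Finset.exists_upper_subset {α : Type*} [LinearOrder α] (t : Finset α) {n : ℕ}
    (hn : n ≤ #t) : ∃ T ⊆ t, #T = n ∧ ∀ a ∈ t \ T, ∀ b ∈ T, a < b := by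
  induction n with
  | zero => exact ⟨∅, empty_subset t, rfl, by simp⟩
  | succ n ih =>
    obtain ⟨T, hTt, hT, hlt⟩ := ih (by omega)
    have hne : (t \ T).Nonempty := by rw [← card_pos, card_sdiff_of_subset hTt]; omega
    set b := (t \ T).max' hne
    have hb : b ∈ t \ T := max'_mem _ hne
    refine ⟨insert b T, insert_subset (mem_sdiff.1 hb).1 hTt,
      by rw [card_insert_of_notMem (mem_sdiff.1 hb).2, hT], ?_⟩
    intro a ha c hc
    have ha' : a ∈ t \ T := by
      simp only [mem_sdiff, mem_insert, not_or] at ha ⊢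
      exact ⟨ha.1, ha.2.2⟩
    rcases mem_insert.1 hc with rfl | hc
    · exact lt_of_le_of_ne (le_max' _ a ha') (by rintro rfl; simp at ha)
    · exact hlt a ha' c hc

section Ramsey

variable {X κ : Type*} [LinearOrder X] {n : ℕ}

def IsMonochromatic (g : (Fin n → X) → κ) (t : Finset X) (c : κ) : Prop :=
  ∀ x, StrictMono x → (∀ i, x i ∈ t) → g x = c

def minHomogeneousBound (R : ℕ → ℕ) : ℕ → ℕ
  | 0 => 0
  | M + 1 => R (minHomogeneousBound R M) + 1

def ramseyBound (k : ℕ) : ℕ → ℕ → ℕ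
  | 0, m => m
  | n + 1, m => minHomogeneousBound (ramseyBound k n) (k * m + 1)

theorem succ_mem_of_strictMono_of_mem_insert {a : X} {t : Finset X} (ha : ∀ b ∈ t, a < b)
    {x : Fin (n + 1) → X} (hx : StrictMono x) (hxt : ∀ i, x i ∈ insert a t) (i : Fin n) :
    x i.succ ∈ t := by
  have h0 : a ≤ x 0 := by
    rcases mem_insert.1 (hxt 0) with h | h
    · exact h.ge
    · exact (ha _ h).le
  exact (mem_insert.1 (hxt i.succ)).resolve_left (h0.trans_lt (hx i.succ_pos)).ne'

theorem exists_minHomogeneous {R : ℕ → ℕ}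
    (hR : ∀ m (s : Finset X) (g : (Fin n → X) → κ), R m ≤ #s →
      ∃ t ⊆ s, m ≤ #t ∧ ∃ c, IsMonochromatic g t c)
    (g : (Fin (n + 1) → X) → κ) (M : ℕ) (s : Finset X) (hs : minHomogeneousBound R M ≤ #s) :
    ∃ t ⊆ s, M ≤ #t ∧ ∃ c : X → κ, ∀ x, StrictMono x → (∀ i, x i ∈ t) → g x = c (x 0) := by
  induction M generalizing s with
  | zero =>
    exact ⟨∅, empty_subset s, le_rfl, fun b => g fun _ => b, fun x _ hx => by simpa using hx 0⟩
  | succ M ih =>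
    simp only [minHomogeneousBound] at hs
    have hsne : s.Nonempty := card_pos.1 (by omega)
    set a := s.min' hsne
    have has : ∀ b ∈ s.erase a, a < b := fun b hb =>
      lt_of_le_of_ne (min'_le s b (mem_of_mem_erase hb)) (ne_of_mem_erase hb).symm
    obtain ⟨ta, hta, hta_card, ca, hca⟩ :=
      hR (minHomogeneousBound R M) (s.erase a) (fun x => g (Fin.cons a x))
        (by rw [card_erase_of_mem (min'_mem s hsne)]; omega)
    obtain ⟨t', ht', ht'_card, c', hc'⟩ := ih ta hta_card
    have hat' : ∀ b ∈ t', a < b := fun b hb => has b (hta (ht' hb))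
    refine ⟨insert a t', insert_subset (min'_mem s hsne) (ht'.trans (hta.trans (erase_subset a s))),
      by rw [card_insert_of_notMem fun h => (hat' a h).false]; omega, Function.update c' a ca, ?_⟩
    intro x hx hxt
    have htail := succ_mem_of_strictMono_of_mem_insert hat' hx hxt
    by_cases hx0 : x 0 = a
    · calc g x = g (Fin.cons a (Fin.tail x)) := by rw [← hx0, Fin.cons_self_tail]
        _ = ca := hca _ (hx.comp Fin.strictMono_succ) fun i => ht' (htail i)
        _ = Function.update c' a ca (x 0) := by rw [hx0, Function.update_self]
    · have hall : ∀ i, x i ∈ t' := Fin.cases ((mem_insert.1 (hxt 0)).resolve_left hx0) htail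
      rw [hc' x hx hall, Function.update_of_ne hx0]

theorem exists_monochromatic [Fintype κ] (n m : ℕ) (s : Finset X) (g : (Fin n → X) → κ)
    (hs : ramseyBound (Fintype.card κ) n m ≤ #s) :
    ∃ t ⊆ s, m ≤ #t ∧ ∃ c, IsMonochromatic g t c := by
  classical
  induction n generalizing m s with
  | zero => exact ⟨s, subset_rfl, hs, g ![], fun x _ _ => congrArg g (Subsingleton.elim _ _)⟩
  | succ n ih =>
    obtain ⟨t, hts, ht, c, hc⟩ := exists_minHomogeneous ih g _ s hs
    obtain ⟨c₀, -, hc₀⟩ : ∃ c₀ ∈ univ, m < #(t.filter (c · = c₀)) :=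
      exists_lt_card_fiber_of_mul_lt_card_of_maps_to (fun b _ => mem_univ (c b))
        (by rw [card_univ]; omega)
    refine ⟨t.filter (c · = c₀), (filter_subset _ t).trans hts, hc₀.le, c₀, fun x hx hxt => ?_⟩
    rw [hc x hx fun i => mem_of_mem_filter _ (hxt i), (mem_filter.1 (hxt 0)).2]

end Ramsey

section DenseRank

variable {X : Type*} [LinearOrder X] {n : ℕ}

theorem card_image_filter_lt_lt (u : Fin n → X) (i : Fin n) :
    #((univ.filter (u · < u i)).image u) < n :=
  card_image_le.trans_lt <| by
    simpa using card_lt_univ_of_notMem (s := univ.filter (u · < u i)) (x := i) (by simp)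

def denseRank (u : Fin n → X) (i : Fin n) : Fin n := ⟨_, card_image_filter_lt_lt u i⟩

theorem exists_strictMono_comp_denseRank (u : Fin n → X) {T : Finset X} (hT : n ≤ #T)
    (huT : ∀ i, ∀ b ∈ T, u i < b) :
    ∃ x : Fin n → X, StrictMono x ∧ (∀ j, x j ∈ univ.image u ∪ T) ∧ u = x ∘ denseRank u := by
  set S := univ.image u ∪ T
  have hnS : n ≤ #S := hT.trans (card_le_card subset_union_right)
  refine ⟨S.orderEmbOfFin rfl ∘ Fin.castLE hnS, (S.orderEmbOfFin rfl).strictMono.comp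
    (Fin.strictMono_castLE hnS), fun j => orderEmbOfFin_mem S rfl _, funext fun i => ?_⟩
  obtain ⟨j, hj⟩ : u i ∈ Set.range (S.orderEmbOfFin rfl) := by
    rw [range_orderEmbOfFin]; simp [S]
  have hbelow : S.filter (· < u i) = (univ.filter (u · < u i)).image u := by
    rw [filter_union, filter_image, filter_false_of_mem fun b hb => not_lt.2 (huT i b hb).le,
      union_empty]
  have hrank : Fin.castLE hnS (denseRank u i) = j := by
    have hidx := card_filter_lt_orderEmbOfFin S rfl j
    rw [hj, hbelow] at hidx
    exact Fin.ext hidx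
  rw [← hj, ← hrank]
  rfl

end DenseRank

section OrderTypeEquiv

variable {X : Type} [LinearOrder X] {n : ℕ} {u v : Fin n → X}

theorem OrderTypeEquiv.eq_iff (h : OrderTypeEquiv u v) (i j : Fin n) : u i = u j ↔ v i = v j := by
  rcases lt_trichotomy i j with hij | rfl | hij
  · exact (h i j hij).2
  · simp
  · rw [eq_comm, eq_comm (a := v i)]
    exact (h j i hij).2

theorem OrderTypeEquiv.lt_iff (h : OrderTypeEquiv u v) (i j : Fin n) : u i < u j ↔ v i < v j := by
  rcases lt_trichotomy i j with hij | rfl | hij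
  · exact (h i j hij).1
  · simp
  · rw [lt_iff_not_ge, lt_iff_not_ge, le_iff_lt_or_eq, le_iff_lt_or_eq, (h j i hij).1,
      h.eq_iff j i]

theorem denseRank_congr (h : OrderTypeEquiv u v) : denseRank u = denseRank v := by
  funext i
  refine Fin.ext (?_ : #((univ.filter (u · < u i)).image u) = #((univ.filter (v · < v i)).image v))
  rw [filter_congr fun j _ => h.lt_iff j i]
  exact card_image_eq_of_eq_iff fun j _ j' _ => h.eq_iff j j'

end OrderTypeEquiv

theorem ordered_ramsey_tuples (k n m : ℕ) :
    ∃ R : ℕ, ∀ (X : Type) (_ : LinearOrder X), (R : Cardinal) ≤ Cardinal.mk X →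
      ∀ f : (Fin n → X) → Fin k,
        ∃ Y : Set X, (m : Cardinal) ≤ Cardinal.mk Y ∧
          ∀ x y : Fin n → X, (∀ i, x i ∈ Y) → (∀ i, y i ∈ Y) →
            OrderTypeEquiv x y → f x = f y := by
  refine ⟨ramseyBound (Fintype.card ((Fin n → Fin n) → Fin k)) n (m + n), fun X _ hX f => ?_⟩
  obtain ⟨p, hp⟩ := Cardinal.le_mk_iff_exists_set.1 hX
  obtain ⟨s, -, hs⟩ := Cardinal.mk_set_eq_nat_iff_finset.1 hp
  obtain ⟨t, -, ht, c, hc⟩ := exists_monochromatic n (m + n) s (fun x p => f (x ∘ p)) hs.ge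
  obtain ⟨T, hTt, hT, hlt⟩ := t.exists_upper_subset (n := n) (by omega)
  have hf : ∀ w : Fin n → X, (∀ i, w i ∈ t \ T) → f w = c (denseRank w) := by
    intro w hw
    obtain ⟨x, hx, hxS, hwx⟩ := exists_strictMono_comp_denseRank w hT.ge fun i => hlt _ (hw i)
    have hSt : univ.image w ∪ T ⊆ t :=
      union_subset (image_subset_iff.2 fun i _ => (mem_sdiff.1 (hw i)).1) hTt
    calc f w = f (x ∘ denseRank w) := congrArg f hwx
      _ = c (denseRank w) := congrFun (hc x hx fun j => hSt (hxS j)) _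
  refine ⟨↑(t \ T), ?_, fun u v hu hv huv => ?_⟩
  · rw [Finset.coe_sort_coe, Cardinal.mk_coe_finset, card_sdiff_of_subset hTt]
    exact_mod_cast (by omega)
  · rw [hf u hu, hf v hv, denseRank_congr huv]
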